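/- arXiv:2602.09285 — 5 statements merged into one kernel-verified Lean document; each statement's English description precedes it below -/
import Mathlib

section
/- Let M, K be real Hilbert spaces, G : M →L K bounded linear, and m ∈ M. Then ⟪(I + G* G)⁻¹ m, m⟫ = ‖m‖² - ⟪(I + G G*)⁻¹ (G m), G m⟫. -/
open scoped RealInnerProductSpace

lemma isUnit_one_add_adjoint_comp_self {M K : Type*}
    [NormedAddCommGroup M] [InnerProductSpace ℝ M] [CompleteSpace M]
    [NormedAddCommGroup K] [InnerProductSpace ℝ K] [CompleteSpace K]
    (G : M →L[ℝ] K) : IsUnit (1 + (ContinuousLinearMap.adjoint G).comp G) := by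
  apply ContinuousLinearMap.isUnit_of_forall_le_norm_inner_map _ (c := 1) one_pos
  intro x
  have h : ⟪(1 + (ContinuousLinearMap.adjoint G).comp G) x, x⟫ = ‖x‖ ^ 2 + ‖G x‖ ^ 2 := by
    simp [ContinuousLinearMap.add_apply, inner_add_left,
      ContinuousLinearMap.adjoint_inner_left, real_inner_self_eq_norm_sq]
  rw [h]
  rw [Real.norm_eq_abs, abs_of_nonneg (by positivity)]
  simp only [NNReal.coe_one, mul_one]
  nlinarith [sq_nonneg ‖G x‖]

/-- **Measurement-space formula for the quadratic form of `(I + G*G)⁻¹`.**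
For a bounded linear operator `G : M →L[ℝ] K` between real Hilbert spaces and `m ∈ M`,
`⟪(I + G* G)⁻¹ m, m⟫ = ‖m‖ ^ 2 - ⟪(I + G G*)⁻¹ (G m), G m⟫`. -/
theorem inner_inv_one_add_adjoint_comp {M K : Type*}
    [NormedAddCommGroup M] [InnerProductSpace ℝ M] [CompleteSpace M]
    [NormedAddCommGroup K] [InnerProductSpace ℝ K] [CompleteSpace K]
    (G : M →L[ℝ] K) (m : M) :
    ⟪(Ring.inverse (1 + (ContinuousLinearMap.adjoint G).comp G)) m, m⟫ =
      ‖m‖ ^ 2 -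
        ⟪(Ring.inverse (1 + G.comp (ContinuousLinearMap.adjoint G))) (G m), G m⟫ := by
  set G' := ContinuousLinearMap.adjoint G with hG'
  set A : M →L[ℝ] M := 1 + G'.comp G with hA
  set B : K →L[ℝ] K := 1 + G.comp G' with hB
  have hAu : IsUnit A := isUnit_one_add_adjoint_comp_self G
  have hBu : IsUnit B := by
    have := isUnit_one_add_adjoint_comp_self G'
    rwa [hG', ContinuousLinearMap.adjoint_adjoint] at this
  set x : M := Ring.inverse A m with hx
  have hAx : A x = m := by
    have := congrArg (fun T : M →L[ℝ] M => T m) (Ring.mul_inverse_cancel A hAu)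
    simpa [ContinuousLinearMap.mul_apply] using this
  have hBGx : B (G x) = G m := by
    have : B (G x) = G (A x) := by
      simp [hA, hB, ContinuousLinearMap.add_apply, ContinuousLinearMap.comp_apply, map_add]
    rw [this, hAx]
  have hBinv : Ring.inverse B (G m) = G x := by
    rw [← hBGx]
    have := congrArg (fun T : K →L[ℝ] K => T (G x)) (Ring.inverse_mul_cancel B hBu)
    simpa [ContinuousLinearMap.mul_apply] using this
  rw [hBinv]
  have key : ⟪x, m⟫ + ⟪G x, G m⟫ = ‖m‖ ^ 2 := by
    have h1 : ⟪G x, G m⟫ = ⟪G' (G x), m⟫ := by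
      rw [hG', ContinuousLinearMap.adjoint_inner_left]
    have h2 : ⟪x, m⟫ + ⟪G' (G x), m⟫ = ⟪A x, m⟫ := by
      rw [hA]; simp [ContinuousLinearMap.add_apply, inner_add_left]
    rw [h1, h2, hAx, real_inner_self_eq_norm_sq]
  have hsym : ⟪x, m⟫ = ⟪(Ring.inverse A) m, m⟫ := by rw [hx]
  linarith [key]
end

section
/- Let M be a real Hilbert space, C ∈ L(M) positive self-adjoint with positive square root C^{1/2}, H ∈ L(M) positive self-adjoint, and f ∈ M. Define Cpost = C^{1/2}(I + H)⁻¹C^{1/2} and Cpost' = C^{1/2}(I + H + f ⊗ f)⁻¹C^{1/2}. Then for every v ∈ M, ⟪v, (Cpost - Cpost')v⟫ = ⟪v, C^{1/2} z⟫² / (1 + ⟪f, z⟫) where z = (I + H)⁻¹ f; in particular Cpost' ≤ Cpost in the Loewner order. -/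
/-!
Sherman–Morrison: if `A` is invertible and `z = A⁻¹ f`, then
`(A + f ⊗ f)⁻¹ = A⁻¹ - (1 + ⟪f, z⟫)⁻¹ • z ⊗ z`, an identity valid in any algebra once
`(f ⊗ f) A⁻¹ (f ⊗ f) = ⟪f, z⟫ • f ⊗ f`. Conjugating by the self-adjoint `R` turns the correction
into `(1 + ⟪f, z⟫)⁻¹ • (R z) ⊗ (R z)`, which is positive because `(I + H)⁻¹` is positive, so
`⟪f, z⟫ ≥ 0`.
-/

open scoped RealInnerProductSpace

/-- The rank-one operator `u ⊗ v : x ↦ ⟪v, x⟫ u` on a real inner product space. -/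
noncomputable def rankOne {M : Type*} [NormedAddCommGroup M] [InnerProductSpace ℝ M]
    (u v : M) : M →L[ℝ] M := (innerSL ℝ v).smulRight u

open scoped Ring InnerProductSpace

theorem Ring.inverse_add_eq_of_mul_inverse_mul_eq_smul {𝕜 A : Type*} [Field 𝕜] [Ring A]
    [Algebra 𝕜 A] {a p : A} (ha : IsUnit a) {t : 𝕜} (hp : p * a⁻¹ʳ * p = t • p)
    (ht : 1 + t ≠ 0) :
    (a + p)⁻¹ʳ = a⁻¹ʳ - (1 + t)⁻¹ • (a⁻¹ʳ * p * a⁻¹ʳ) := by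
  have hc : (1 + t)⁻¹ * (1 + t) = 1 := inv_mul_cancel₀ ht
  refine (Ring.inverse_unit ⟨a + p, _, ?_, ?_⟩ :)
  · have hp' : p * (a⁻¹ʳ * p * a⁻¹ʳ) = t • (p * a⁻¹ʳ) := by
      rw [← mul_assoc, ← mul_assoc, hp, smul_mul_assoc]
    simp only [add_mul, mul_sub, mul_smul_comm, hp', ← mul_assoc a, Ring.mul_inverse_cancel a ha,
      one_mul]
    linear_combination (norm := module) -(hc • (p * a⁻¹ʳ))
  · have hp' : a⁻¹ʳ * p * a⁻¹ʳ * p = t • (a⁻¹ʳ * p) := by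
      rw [mul_assoc, mul_assoc, ← mul_assoc p, hp, mul_smul_comm]
    simp only [mul_add, sub_mul, smul_mul_assoc, hp', mul_assoc _ a⁻¹ʳ a,
      Ring.inverse_mul_cancel a ha, mul_one]
    linear_combination (norm := module) -(hc • (a⁻¹ʳ * p))

namespace ContinuousLinearMap

variable {𝕜 E : Type*} [RCLike 𝕜] [NormedAddCommGroup E] [InnerProductSpace 𝕜 E] [CompleteSpace E]

theorem IsPositive.isUnit_one_add {T : E →L[𝕜] E} (hT : T.IsPositive) : IsUnit (1 + T) := by
  refine isUnit_of_forall_le_norm_inner_map _ (c := 1) one_pos fun x => ?_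
  calc ‖x‖ ^ 2 * ((1 : NNReal) : ℝ) = RCLike.re ⟪x, x⟫_𝕜 := by simp
    _ ≤ RCLike.re ⟪(1 + T) x, x⟫_𝕜 := by
      simpa [add_apply, inner_add_left] using hT.re_inner_nonneg_left x
    _ ≤ ‖⟪(1 + T) x, x⟫_𝕜‖ := RCLike.re_le_norm _

theorem IsPositive.ringInverse {T : E →L[𝕜] E} (hT : T.IsPositive) : T⁻¹ʳ.IsPositive := by
  by_cases hT₀ : IsUnit T
  · have hconj : adjoint T⁻¹ʳ ∘L T ∘L T⁻¹ʳ = T⁻¹ʳ := by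
      rw [hT.isSelfAdjoint.ringInverse.adjoint_eq]
      exact Ring.inverse_mul_cancel_left T _ hT₀
    simpa [hconj] using hT.adjoint_conj T⁻¹ʳ
  · simp [Ring.inverse_non_unit _ hT₀]

end ContinuousLinearMap

namespace InnerProductSpace

variable {𝕜 E : Type*} [RCLike 𝕜] [NormedAddCommGroup E] [InnerProductSpace 𝕜 E]

theorem rankOne_mul_mul_rankOne (u v u' v' : E) (T : E →L[𝕜] E) :
    rankOne 𝕜 u v * T * rankOne 𝕜 u' v' = ⟪v, T u'⟫_𝕜 • rankOne 𝕜 u v' := by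
  ext x
  simp [smul_smul, mul_comm]

theorem mul_rankOne_mul_of_isSymmetric (T : E →L[𝕜] E) {S : E →L[𝕜] E} (hS : S.IsSymmetric)
    (u v : E) : T * rankOne 𝕜 u v * S = rankOne 𝕜 (T u) (S v) := by
  ext x
  simpa using congrArg (· • T u) (hS v x).symm

theorem inverse_add_rankOne_self {A : E →L[𝕜] E} (hA : IsUnit A) (hA' : A⁻¹ʳ.IsSymmetric)
    (f : E) (hf : 1 + ⟪f, A⁻¹ʳ f⟫_𝕜 ≠ 0) :
    (A + rankOne 𝕜 f f)⁻¹ʳ =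
      A⁻¹ʳ - (1 + ⟪f, A⁻¹ʳ f⟫_𝕜)⁻¹ • rankOne 𝕜 (A⁻¹ʳ f) (A⁻¹ʳ f) := by
  rw [Ring.inverse_add_eq_of_mul_inverse_mul_eq_smul hA (rankOne_mul_mul_rankOne _ _ _ _ _) hf,
    mul_rankOne_mul_of_isSymmetric _ hA']

end InnerProductSpace

theorem posterior_covariance_update_general {M : Type*} [NormedAddCommGroup M] [InnerProductSpace ℝ M]
    [CompleteSpace M] (H : M →L[ℝ] M) (hH : H.IsPositive)
    (R : M →L[ℝ] M) (hR : R.IsPositive) (f : M) :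
    (∀ v : M,
      ⟪v, ((R * Ring.inverse (1 + H) * R) - (R * Ring.inverse (1 + H + rankOne f f) * R)) v⟫ =
        ⟪v, R ((Ring.inverse (1 + H)) f)⟫ ^ 2 / (1 + ⟪f, (Ring.inverse (1 + H)) f⟫)) ∧
      ((R * Ring.inverse (1 + H) * R) -
        (R * Ring.inverse (1 + H + rankOne f f) * R)).IsPositive := by
  set z := (1 + H)⁻¹ʳ f
  have hinv : (1 + H)⁻¹ʳ.IsPositive := (ContinuousLinearMap.isPositive_one.add hH).ringInverse
  have hgain : 0 ≤ ⟪f, z⟫ := hinv.inner_nonneg_right f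
  have hdiff : R * (1 + H)⁻¹ʳ * R - R * (1 + H + rankOne f f)⁻¹ʳ * R =
      (1 + ⟪f, z⟫)⁻¹ • InnerProductSpace.rankOne ℝ (R z) (R z) := by
    rw [show rankOne f f = InnerProductSpace.rankOne ℝ f f from rfl,
      InnerProductSpace.inverse_add_rankOne_self hH.isUnit_one_add hinv.isSymmetric f
        (by positivity),
      mul_sub, sub_mul, mul_smul_comm, smul_mul_assoc,
      InnerProductSpace.mul_rankOne_mul_of_isSymmetric _ hR.isSymmetric, sub_sub_cancel]
  rw [hdiff]
  refine ⟨fun v => ?_, (InnerProductSpace.isPositive_rankOne_self _).smul_of_nonneg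
    (by positivity)⟩
  simp [inner_smul_right, real_inner_comm, div_eq_inv_mul, sq]

/-- **Posterior covariance decrease from one added sensor.** Let `C, H` be positive
self-adjoint bounded operators on a real Hilbert space `M`, with `R` the positive square root
of `C` (`R` positive self-adjoint, `R * R = C`), and `f ∈ M`. With
`Cpost = C^{1/2} (I + H)⁻¹ C^{1/2}`, `Cpost' = C^{1/2} (I + H + f ⊗ f)⁻¹ C^{1/2}`, and
`z = (I + H)⁻¹ f`, we have `⟪v, (Cpost - Cpost') v⟫ = ⟪v, C^{1/2} z⟫² / (1 + ⟪f, z⟫)` for every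
`v`, and in particular `Cpost' ≤ Cpost` in the Loewner order, i.e. `Cpost - Cpost'` is
positive self-adjoint. -/
theorem posterior_covariance_update {M : Type*} [NormedAddCommGroup M] [InnerProductSpace ℝ M]
    [CompleteSpace M] (C H : M →L[ℝ] M) (hC : C.IsPositive) (hH : H.IsPositive)
    (R : M →L[ℝ] M) (hR : R.IsPositive) (hRsq : R * R = C) (f : M) :
    (∀ v : M,
      ⟪v, ((R * Ring.inverse (1 + H) * R) - (R * Ring.inverse (1 + H + rankOne f f) * R)) v⟫ =
        ⟪v, R ((Ring.inverse (1 + H)) f)⟫ ^ 2 / (1 + ⟪f, (Ring.inverse (1 + H)) f⟫)) ∧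
      ((R * Ring.inverse (1 + H) * R) -
        (R * Ring.inverse (1 + H + rankOne f f) * R)).IsPositive :=
  posterior_covariance_update_general H hH R hR f
end

section
/- Let M be a real Hilbert space and K ∈ L(M) a positive self-adjoint finite-rank operator, u ∈ M. Then det(I + K + u ⊗ u) = det(I + K) · (1 + ‖(I + K)^{-1/2} u‖²), where det denotes the Fredholm determinant (product of (1 + λₙ) over eigenvalues of the finite-rank perturbation). -/
open scoped RealInnerProductSpace

/-- The Fredholm determinant `det (I + T)` of a perturbation of the identity by a
finite-rank operator `T`.  Since `range T` is a finite-dimensional invariant subspace of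
`I + T` containing all (generalized) eigenvectors of `T` with nonzero eigenvalue, this equals
the finite-dimensional determinant of `I + T` restricted to `range T`, i.e. the product
`Π (1 + λₙ)` over the nonzero eigenvalues `λₙ` of `T` counted with algebraic multiplicity. -/
noncomputable def fredholmDet {M : Type*} [NormedAddCommGroup M] [InnerProductSpace ℝ M]
    (T : M →L[ℝ] M) : ℝ :=
  LinearMap.det ((1 + T : M →L[ℝ] M).toLinearMap.restrict
    (p := LinearMap.range (T : M →ₗ[ℝ] M))
    (fun x hx => by
      obtain ⟨y, rfl⟩ := hx
      exact ⟨y + T y, by simp [map_add]⟩))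

/-!
With `a := (1 + K)⁻¹ u` one has `1 + K + u ⊗ u = (1 + K)(1 + a ⊗ u)`. Fredholm determinants
are multiplicative: on a finite-dimensional subspace containing the ranges of all perturbations
involved, each of them is an ordinary determinant, because `1 + T` induces the identity on the
quotient by `range T`. The matrix determinant lemma gives `det (1 + a ⊗ u) = 1 + ⟪u, a⟫`, and
`⟪u, (1 + K)⁻¹ u⟫ = ‖R⁻¹ u‖²` since `R⁻¹` is self-adjoint with `R⁻¹ R⁻¹ = (R R)⁻¹`.
-/

namespace LinearMap

variable {𝕜 E : Type*} [Field 𝕜] [AddCommGroup E] [Module 𝕜 E]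

theorem det_eq_det_restrict_of_sub_mem [FiniteDimensional 𝕜 E] (f : E →ₗ[𝕜] E)
    {W : Submodule 𝕜 E} (hW : W ≤ W.comap f) (h : ∀ x, f x - x ∈ W) :
    f.det = (f.restrict hW).det := by
  have hquot : W.mapQ W f hW = LinearMap.id := by
    ext x
    exact (Submodule.Quotient.eq W).mpr (h x)
  rw [det_eq_det_mul_det W f hW, hquot, det_id, mul_one]

theorem det_restrict_eq_det_restrict_of_sub_mem (f : E →ₗ[𝕜] E) {V W : Submodule 𝕜 E}
    [FiniteDimensional 𝕜 V] (hWV : W ≤ V) (hV : Set.MapsTo f V V) (hW : Set.MapsTo f W W)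
    (h : ∀ x ∈ V, f x - x ∈ W) :
    (f.restrict hV).det = (f.restrict hW).det := by
  have hW' : W.comap V.subtype ≤ (W.comap V.subtype).comap (f.restrict hV) :=
    fun x hx => hW hx
  rw [det_eq_det_restrict_of_sub_mem _ hW' fun x => h x x.2,
    ← det_conj _ (Submodule.comapSubtypeEquivOfLe hWV)]
  rfl

theorem det_id_add_smulRight {R N : Type*} [CommRing R] [AddCommGroup N] [Module R N]
    [Module.Free R N] [Module.Finite R N] (φ : N →ₗ[R] R) (a : N) :
    (id + φ.smulRight a).det = 1 + φ a := by
  classical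
  let b := Module.Free.chooseBasis R N
  have hmatrix : toMatrix b b (φ.smulRight a) =
      Matrix.replicateCol Unit (b.repr a) * Matrix.replicateRow Unit (fun j => φ (b j)) := by
    ext i j
    simp [toMatrix_apply, Matrix.mul_apply, mul_comm]
  rw [← det_toMatrix b, map_add, toMatrix_id, hmatrix,
    Matrix.det_one_add_replicateCol_mul_replicateRow]
  conv_rhs => rw [← b.sum_repr a, map_sum]
  simp [dotProduct, mul_comm]

end LinearMap

namespace ContinuousLinearMap

variable {M : Type*} [NormedAddCommGroup M] [InnerProductSpace ℝ M]

theorem IsPositive.isUnit_one_add_s9 [CompleteSpace M] {K : M →L[ℝ] M} (hK : K.IsPositive) :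
    IsUnit (1 + K) := by
  refine isUnit_of_forall_le_norm_inner_map _ (c := 1) one_pos fun x => ?_
  calc ‖x‖ ^ 2 * ((1 : NNReal) : ℝ) ≤ ‖x‖ ^ 2 + ⟪K x, x⟫ := by
        simpa using hK.inner_nonneg_left x
    _ = ⟪(1 + K) x, x⟫ := by simp [inner_add_left]
    _ ≤ ‖⟪(1 + K) x, x⟫‖ := Real.le_norm_self _

theorem norm_ringInverse_apply_sq [CompleteSpace M] {R : M →L[ℝ] M} (hR : IsSelfAdjoint R)
    (u : M) :
    ‖Ring.inverse R u‖ ^ 2 = ⟪u, Ring.inverse (R * R) u⟫ := by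
  rw [Ring.mul_inverse_rev' (Commute.refl R), ← real_inner_self_eq_norm_sq]
  exact hR.ringInverse.isSymmetric _ _

end ContinuousLinearMap

section Fredholm

open LinearMap

variable {M : Type*} [NormedAddCommGroup M] [InnerProductSpace ℝ M]

theorem mapsTo_one_add_of_range_le {T : M →L[ℝ] M} {V : Submodule ℝ M}
    (hV : range (T : M →ₗ[ℝ] M) ≤ V) : Set.MapsTo (1 + T : M →L[ℝ] M) V V :=
  fun x hx => V.add_mem hx (hV ⟨x, rfl⟩)

theorem fredholmDet_eq_det_restrict (T : M →L[ℝ] M) {V : Submodule ℝ M} [FiniteDimensional ℝ V]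
    (hV : range (T : M →ₗ[ℝ] M) ≤ V) :
    fredholmDet T =
      ((1 + T : M →L[ℝ] M).toLinearMap.restrict (mapsTo_one_add_of_range_le hV)).det :=
  (det_restrict_eq_det_restrict_of_sub_mem _ hV _ (mapsTo_one_add_of_range_le le_rfl)
    fun x _ => by simp).symm

theorem fredholmDet_add_add_mul (S T : M →L[ℝ] M)
    [FiniteDimensional ℝ (range (S : M →ₗ[ℝ] M))] [FiniteDimensional ℝ (range (T : M →ₗ[ℝ] M))] :
    fredholmDet (S + T + S * T) = fredholmDet S * fredholmDet T := by
  set V := range (S : M →ₗ[ℝ] M) ⊔ range (T : M →ₗ[ℝ] M)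
  have hS : range (S : M →ₗ[ℝ] M) ≤ V := le_sup_left
  have hT : range (T : M →ₗ[ℝ] M) ≤ V := le_sup_right
  have hST : range ((S + T + S * T : M →L[ℝ] M) : M →ₗ[ℝ] M) ≤ V := by
    rintro _ ⟨x, rfl⟩
    exact V.add_mem (V.add_mem (hS ⟨x, rfl⟩) (hT ⟨x, rfl⟩)) (hS ⟨T x, rfl⟩)
  have hmul : (1 + (S + T + S * T) : M →L[ℝ] M) = (1 + S) * (1 + T) := by noncomm_ring
  rw [fredholmDet_eq_det_restrict _ hST, fredholmDet_eq_det_restrict _ hS,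
    fredholmDet_eq_det_restrict _ hT, ← det_comp]
  congr 1
  ext x
  simp [hmul]

theorem range_rankOne_le (a v : M) : range (rankOne a v : M →ₗ[ℝ] M) ≤ ℝ ∙ a := by
  rintro _ ⟨x, rfl⟩
  exact Submodule.smul_mem _ _ (Submodule.mem_span_singleton_self a)

instance finiteDimensional_range_rankOne (a v : M) :
    FiniteDimensional ℝ (range (rankOne a v : M →ₗ[ℝ] M)) :=
  Submodule.finiteDimensional_of_le (range_rankOne_le a v)

theorem fredholmDet_rankOne (a v : M) : fredholmDet (rankOne a v) = 1 + ⟪v, a⟫ := by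
  have ha : a ∈ ℝ ∙ a := Submodule.mem_span_singleton_self a
  rw [fredholmDet_eq_det_restrict _ (range_rankOne_le a v)]
  have hrestrict : ((1 + rankOne a v : M →L[ℝ] M).toLinearMap.restrict
      (mapsTo_one_add_of_range_le (range_rankOne_le a v))) =
      LinearMap.id + ((innerₛₗ ℝ v).comp (ℝ ∙ a).subtype).smulRight ⟨a, ha⟩ := by
    ext x
    simp [rankOne]
  rw [hrestrict, det_id_add_smulRight]
  rfl

end Fredholm

/-- **Rank-one update of the Fredholm determinant.** Let `K` be positive self-adjoint of
finite rank on a real Hilbert space `M`, `u ∈ M`, and `R` the positive square root of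
`I + K` (`R` positive self-adjoint with `R * R = I + K`, so `R⁻¹ = (I + K)^{-1/2}`). Then
`det(I + K + u ⊗ u) = det(I + K) · (1 + ‖(I + K)^{-1/2} u‖²)`. -/
theorem fredholmDet_rankOne_update {M : Type*} [NormedAddCommGroup M] [InnerProductSpace ℝ M]
    [CompleteSpace M] (K : M →L[ℝ] M) (hK : K.IsPositive)
    (hfin : FiniteDimensional ℝ (LinearMap.range (K : M →ₗ[ℝ] M)))
    (R : M →L[ℝ] M) (hR : R.IsPositive) (hRsq : R * R = 1 + K) (u : M) :
    fredholmDet (K + rankOne u u) =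
      fredholmDet K * (1 + ‖(Ring.inverse R) u‖ ^ 2) := by
  set a := Ring.inverse (1 + K) u
  have ha : a + K a = u := by
    simpa using congrArg (· u) (Ring.mul_inverse_cancel _ hK.isUnit_one_add_s9)
  have hsplit : K + rankOne u u = K + rankOne a u + K * rankOne a u := by
    ext x
    simp [rankOne, ← ha, smul_add, add_assoc]
  rw [hsplit, fredholmDet_add_add_mul, fredholmDet_rankOne,
    ContinuousLinearMap.norm_ringInverse_apply_sq hR.isSelfAdjoint, hRsq]
end

section
/- Let M be a real Hilbert space, f₁, …, f_d ∈ M, H(S) = Σ_{i∈S} fᵢ ⊗ fᵢ for S ⊆ {1,…,d}, and Φ(S) = log det(I + H(S)). Then Φ is submodular: for every S ⊆ {1,…,d} and distinct r, t ∉ S, Φ(S ∪ {r}) - Φ(S) ≥ Φ(S ∪ {r,t}) - Φ(S ∪ {t}). -/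
/-!
All operators `H(S)` have range in the finite-dimensional span `W` of the `fᵢ`, and `I + H(S)`
is the identity modulo `W`, so `det (I + H(S))` is an ordinary determinant on `W`; in an
orthonormal basis of `W` it is `det A_S` with `A_S = 1 + ∑_{i ∈ S} xᵢ xᵢᵀ`. By the matrix
determinant lemma `Φ(S ∪ {r}) - Φ(S) = log (1 + xᵣᵀ A_S⁻¹ xᵣ)`, and by Sherman–Morrison the
quadratic form of `A⁻¹` can only decrease when a rank-one term `xₜ xₜᵀ` is added to `A`.
-/

open scoped RealInnerProductSpace

theorem LinearMap.det_restrict_eq_of_sub_mem {K V : Type*} [Field K] [AddCommGroup V]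
    [Module K V] (f : V →ₗ[K] V) {p q : Submodule K V} (hpq : p ≤ q) [FiniteDimensional K q]
    (hp : ∀ x ∈ p, f x ∈ p) (hq : ∀ x ∈ q, f x ∈ q) (hsub : ∀ x ∈ q, f x - x ∈ p) :
    (f.restrict hp).det = (f.restrict hq).det := by
  set g := f.restrict hq
  set p' := p.comap q.subtype
  have hg : p' ≤ p'.comap g := fun x hx => hp x hx
  have hquot : p'.mapQ p' g hg = LinearMap.id := by
    ext x
    exact (Submodule.Quotient.eq p').mpr (hsub x x.2)
  have hconj : (Submodule.comapSubtypeEquivOfLe hpq : p' →ₗ[K] p) ∘ₗ g.restrict hg ∘ₗ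
      ((Submodule.comapSubtypeEquivOfLe hpq).symm : p →ₗ[K] p') = f.restrict hp := rfl
  rw [LinearMap.det_eq_det_mul_det p' g hg, hquot, LinearMap.det_id, mul_one, ← hconj,
    LinearMap.det_conj]

namespace Matrix
variable {n K : Type*} [Fintype n] [DecidableEq n] [Field K]

theorem det_add_vecMulVec {A : Matrix n n K} (hA : IsUnit A.det) (u v : n → K) :
    (A + vecMulVec u v).det = A.det * (1 + v ⬝ᵥ A⁻¹ *ᵥ u) := by
  rw [vecMulVec_eq Unit, det_add_replicateCol_mul_replicateRow hA,
    det_unique (1 + _ : Matrix Unit Unit K), Matrix.mul_assoc, ← replicateCol_mulVec]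
  simp

theorem inv_add_vecMulVec {A : Matrix n n K} (hA : IsUnit A.det) (u v : n → K)
    (h : 1 + v ⬝ᵥ A⁻¹ *ᵥ u ≠ 0) :
    (A + vecMulVec u v)⁻¹ =
      A⁻¹ - (1 + v ⬝ᵥ A⁻¹ *ᵥ u)⁻¹ • vecMulVec (A⁻¹ *ᵥ u) (v ᵥ* A⁻¹) := by
  apply inv_eq_right_inv
  rw [Matrix.add_mul, Matrix.mul_sub, Matrix.mul_sub, Matrix.mul_smul, Matrix.mul_smul,
    mul_vecMulVec, mul_vecMulVec, mulVec_mulVec, mul_nonsing_inv A hA, one_mulVec,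
    vecMulVec_mulVec, vecMulVec_mul, op_smul_eq_smul, smul_vecMulVec, smul_smul]
  -- every correction term is a multiple of `vecMulVec u (v ᵥ* A⁻¹)`
  match_scalars
  · rfl
  · field_simp
    ring

theorem PosDef.dotProduct_inv_add_vecMulVec_mulVec_le {A : Matrix n n ℝ} (hA : A.PosDef)
    (u w : n → ℝ) : u ⬝ᵥ (A + vecMulVec w w)⁻¹ *ᵥ u ≤ u ⬝ᵥ A⁻¹ *ᵥ u := by
  have hdet : IsUnit A.det := (isUnit_iff_isUnit_det A).mp hA.isUnit
  have hk : 0 ≤ w ⬝ᵥ A⁻¹ *ᵥ w := by simpa using hA.inv.posSemidef.dotProduct_mulVec_nonneg w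
  have hsymm : u ⬝ᵥ A⁻¹ *ᵥ w = w ᵥ* A⁻¹ ⬝ᵥ u := by
    rw [dotProduct_comm, ← vecMul_transpose, (isHermitian_iff_isSymm.mp hA.inv.isHermitian).eq]
  have hpos : 0 < 1 + w ⬝ᵥ A⁻¹ *ᵥ w := by linarith
  rw [inv_add_vecMulVec hdet w w hpos.ne', sub_mulVec, dotProduct_sub, smul_mulVec,
    dotProduct_smul, vecMulVec_mulVec, op_smul_eq_smul, dotProduct_smul, ← hsymm, smul_eq_mul,
    smul_eq_mul, sub_le_self_iff]
  exact mul_nonneg (inv_nonneg.mpr hpos.le) (mul_self_nonneg _)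

theorem PosDef.log_det_add_vecMulVec_sub_log_det {A : Matrix n n ℝ} (hA : A.PosDef)
    (u : n → ℝ) :
    Real.log (A + vecMulVec u u).det - Real.log A.det = Real.log (1 + u ⬝ᵥ A⁻¹ *ᵥ u) := by
  have hk : 0 ≤ u ⬝ᵥ A⁻¹ *ᵥ u := by simpa using hA.inv.posSemidef.dotProduct_mulVec_nonneg u
  rw [det_add_vecMulVec ((isUnit_iff_isUnit_det A).mp hA.isUnit),
    Real.log_mul hA.det_pos.ne' (by positivity), add_sub_cancel_left]

theorem PosDef.log_det_diminishing_returns {A : Matrix n n ℝ} (hA : A.PosDef) (u w : n → ℝ) :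
    Real.log (A + vecMulVec w w + vecMulVec u u).det - Real.log (A + vecMulVec w w).det ≤
      Real.log (A + vecMulVec u u).det - Real.log A.det := by
  have hAw : (A + vecMulVec w w).PosDef :=
    hA.add_posSemidef (by simpa using posSemidef_vecMulVec_self_star w)
  have hk : 0 ≤ u ⬝ᵥ (A + vecMulVec w w)⁻¹ *ᵥ u := by
    simpa using hAw.inv.posSemidef.dotProduct_mulVec_nonneg u
  rw [hA.log_det_add_vecMulVec_sub_log_det, hAw.log_det_add_vecMulVec_sub_log_det]
  gcongr
  exact hA.dotProduct_inv_add_vecMulVec_mulVec_le u w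

end Matrix

section FredholmDet

variable {M : Type*} [NormedAddCommGroup M] [InnerProductSpace ℝ M]

theorem fredholmDet_eq_det_one_add_restrict (T : M →L[ℝ] M) {W : Submodule ℝ M}
    [FiniteDimensional ℝ W] (hT : LinearMap.range (T : M →ₗ[ℝ] M) ≤ W) :
    fredholmDet T = (1 + (T : M →ₗ[ℝ] M).restrict fun x _ => hT ⟨x, rfl⟩).det := by
  rw [fredholmDet, LinearMap.det_restrict_eq_of_sub_mem _ hT
    (hq := fun x hx => W.add_mem hx (hT ⟨x, rfl⟩))
    (hsub := fun x _ => by simp)]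
  rfl

theorem fredholmDet_sum_rankOne {ι κ : Type*} [Fintype κ] [DecidableEq κ]
    {W : Submodule ℝ M} [FiniteDimensional ℝ W] (b : OrthonormalBasis κ ℝ W) (g : ι → W)
    (s : Finset ι) :
    fredholmDet (∑ i ∈ s, rankOne (g i : M) (g i)) =
      (1 + ∑ i ∈ s, Matrix.vecMulVec (b.repr (g i)) (b.repr (g i))).det := by
  have hrange :
      LinearMap.range ((∑ i ∈ s, rankOne (g i : M) (g i) : M →L[ℝ] M) : M →ₗ[ℝ] M) ≤ W := by
    rintro _ ⟨x, rfl⟩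
    simpa [rankOne] using W.sum_mem fun i _ => W.smul_mem ⟪(g i : M), x⟫ (g i).2
  have hrestrict : ((∑ i ∈ s, rankOne (g i : M) (g i) : M →L[ℝ] M) : M →ₗ[ℝ] M).restrict
      (fun x _ => hrange ⟨x, rfl⟩) =
      ∑ i ∈ s, (InnerProductSpace.rankOne ℝ (g i) (g i) : W →ₗ[ℝ] W) := by
    ext x
    simp [rankOne]
  rw [fredholmDet_eq_det_one_add_restrict _ hrange, hrestrict,
    ← LinearMap.det_toMatrix b.toBasis, map_add, LinearMap.toMatrix_one, map_sum]
  have hrepr (x : W) : ⇑(b.toBasis.repr x) = b.repr x := funext (b.coe_toBasis_repr_apply x)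
  simp [InnerProductSpace.toMatrix_rankOne, hrepr]

end FredholmDet

theorem eig_submodular_general {M : Type*} [NormedAddCommGroup M] [InnerProductSpace ℝ M]
    {d : ℕ} (f : Fin d → M) (S : Finset (Fin d)) (r t : Fin d)
    (hr : r ∉ S) (ht : t ∉ S) (hrt : r ≠ t) :
    Real.log (fredholmDet (∑ i ∈ insert r S, rankOne (f i) (f i))) -
        Real.log (fredholmDet (∑ i ∈ S, rankOne (f i) (f i))) ≥
      Real.log (fredholmDet (∑ i ∈ insert r (insert t S), rankOne (f i) (f i))) -
        Real.log (fredholmDet (∑ i ∈ insert t S, rankOne (f i) (f i))) := by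
  let W := Submodule.span ℝ (Set.range f)
  have : FiniteDimensional ℝ W := FiniteDimensional.span_of_finite ℝ (Set.finite_range f)
  let g : Fin d → W := fun i => ⟨f i, Submodule.subset_span ⟨i, rfl⟩⟩
  let x i := ⇑((stdOrthonormalBasis ℝ W).repr (g i))
  have hdet (s : Finset (Fin d)) : fredholmDet (∑ i ∈ s, rankOne (f i) (f i)) =
      (1 + ∑ i ∈ s, Matrix.vecMulVec (x i) (x i)).det :=
    fredholmDet_sum_rankOne (stdOrthonormalBasis ℝ W) g s
  have hA : (1 + ∑ i ∈ S, Matrix.vecMulVec (x i) (x i)).PosDef :=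
    Matrix.PosDef.one.add_posSemidef <| Matrix.posSemidef_sum S fun i _ => by
      simpa using Matrix.posSemidef_vecMulVec_self_star (x i)
  have hrt' : r ∉ insert t S := Finset.mem_insert.not.mpr (not_or.mpr ⟨hrt, hr⟩)
  simp only [hdet]
  rw [Finset.sum_insert hr, Finset.sum_insert hrt', Finset.sum_insert ht]
  convert hA.log_det_diminishing_returns (x r) (x t) using 4 <;> abel

/-- **Submodularity of the expected information gain.** Let `f₁, …, f_d ∈ M` (a real Hilbert
space), `H(S) = Σ_{i∈S} fᵢ ⊗ fᵢ`, and `Φ(S) = log det(I + H(S))` (Fredholm determinant).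
Then for every `S ⊆ {1,…,d}` and distinct `r, t ∉ S`,
`Φ(S ∪ {r}) - Φ(S) ≥ Φ(S ∪ {r,t}) - Φ(S ∪ {t})`. -/
theorem eig_submodular {M : Type*} [NormedAddCommGroup M] [InnerProductSpace ℝ M]
    [CompleteSpace M] {d : ℕ} (f : Fin d → M) (S : Finset (Fin d)) (r t : Fin d)
    (hr : r ∉ S) (ht : t ∉ S) (hrt : r ≠ t) :
    Real.log (fredholmDet (∑ i ∈ insert r S, rankOne (f i) (f i))) -
        Real.log (fredholmDet (∑ i ∈ S, rankOne (f i) (f i))) ≥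
      Real.log (fredholmDet (∑ i ∈ insert r (insert t S), rankOne (f i) (f i))) -
        Real.log (fredholmDet (∑ i ∈ insert t S, rankOne (f i) (f i))) :=
  eig_submodular_general f S r t hr ht hrt
end

section
/- Let V be a finite set, f : Finset V → ℝ monotone, submodular, and normalized (f(∅) = 0), and k ≤ |V|. Let S_k be the output of the greedy algorithm that starts with S₀ = ∅ and at each step adds an element maximizing the marginal gain. Then f(S_k) ≥ (1 - 1/e) · max { f(R) : R ⊆ V, |R| ≤ k }. -/
/-- **Nemhauser–Wolsey–Fisher `(1 - 1/e)` guarantee for the greedy algorithm.** Let `V` be a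
finite set and `f : Finset V → ℝ` be monotone, submodular, and normalized (`f ∅ = 0`), and let
`k ≤ |V|`. Let `S : ℕ → Finset V` be a run of the greedy algorithm: `S 0 = ∅` and at each of
the first `k` steps an element maximizing the marginal gain is added. Then
`f (S k) ≥ (1 - 1/e) · max { f R : R ⊆ V, |R| ≤ k }`. -/
theorem greedy_submodular_guarantee {V : Type*} [Fintype V] [DecidableEq V]
    (f : Finset V → ℝ)
    (hmono : ∀ A B : Finset V, A ⊆ B → f A ≤ f B)
    (hsub : ∀ A B : Finset V, A ⊆ B → ∀ v ∉ B,
      f (insert v A) - f A ≥ f (insert v B) - f B)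
    (hnorm : f ∅ = 0)
    (k : ℕ) (hk : k ≤ Fintype.card V)
    (S : ℕ → Finset V) (hS0 : S 0 = ∅)
    (hgreedy : ∀ l < k, ∃ v ∉ S l,
      S (l + 1) = insert v (S l) ∧
        ∀ w ∉ S l, f (insert w (S l)) - f (S l) ≤ f (insert v (S l)) - f (S l)) :
    ∀ R : Finset V, R.card ≤ k →
      (1 - 1 / Real.exp 1) * f R ≤ f (S k) := by
  intro R hR
  -- marginal-gain lemma
  have marg : ∀ (T A : Finset V), (∀ v ∈ T, v ∉ A) →
      f (A ∪ T) ≤ f A + ∑ v ∈ T, (f (insert v A) - f A) := by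
    intro T
    induction T using Finset.induction_on with
    | empty => intro A _; simp
    | @insert v T hvT ih =>
      intro A hT
      have hvA : v ∉ A := hT v (Finset.mem_insert_self v T)
      have hvAT : v ∉ A ∪ T := by
        simp [hvA, hvT]
      have h1 : A ∪ insert v T = insert v (A ∪ T) := Finset.union_insert v A T
      have h2 := hsub A (A ∪ T) Finset.subset_union_left v hvAT
      have h3 := ih A (fun w hw => hT w (Finset.mem_insert_of_mem hw))
      rw [h1, Finset.sum_insert hvT]
      linarith
  by_cases hk0 : k = 0
  · subst hk0
    have : R = ∅ := Finset.card_eq_zero.mp (Nat.le_zero.mp hR)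
    rw [this, hS0, hnorm]
    simp
  · have hk1 : 1 ≤ k := Nat.one_le_iff_ne_zero.mpr hk0
    have hkpos : (0:ℝ) < (k:ℝ) := by exact_mod_cast Nat.pos_of_ne_zero hk0
    have hfR : 0 ≤ f R := by
      have := hmono ∅ R (Finset.empty_subset R); linarith
    have h1k : (0:ℝ) ≤ 1 - 1/(k:ℝ) := by
      have : (1:ℝ)/(k:ℝ) ≤ 1 := by
        rw [div_le_one hkpos]; exact_mod_cast hk1
      linarith
    -- per-step decrease
    have step : ∀ l < k, f R - f (S (l+1)) ≤ (1 - 1/(k:ℝ)) * (f R - f (S l)) := by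
      intro l hl
      obtain ⟨v, hv, hSl1, hmax⟩ := hgreedy l hl
      set g := f (insert v (S l)) - f (S l) with hg
      have hg0 : 0 ≤ g := by
        have := hmono (S l) (insert v (S l)) (Finset.subset_insert v (S l)); linarith
      have hsum : f (S l ∪ (R \ S l)) ≤ f (S l) + ∑ w ∈ R \ S l, (f (insert w (S l)) - f (S l)) :=
        marg (R \ S l) (S l) (fun w hw => (Finset.mem_sdiff.mp hw).2)
      have hsum2 : ∑ w ∈ R \ S l, (f (insert w (S l)) - f (S l)) ≤ (R \ S l).card * g := by
        calc ∑ w ∈ R \ S l, (f (insert w (S l)) - f (S l))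
            ≤ ∑ _w ∈ R \ S l, g :=
              Finset.sum_le_sum (fun w hw => hmax w (Finset.mem_sdiff.mp hw).2)
          _ = (R \ S l).card * g := by rw [Finset.sum_const, nsmul_eq_mul]
      have hcard : ((R \ S l).card : ℝ) ≤ (k:ℝ) := by
        have h1 : (R \ S l).card ≤ R.card := Finset.card_le_card (Finset.sdiff_subset)
        exact_mod_cast le_trans h1 hR
      have hRsub : f R ≤ f (S l ∪ (R \ S l)) := by
        apply hmono
        intro x hx
        simp only [Finset.mem_union, Finset.mem_sdiff]
        by_cases hxS : x ∈ S l
        · exact Or.inl hxS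
        · exact Or.inr ⟨hx, hxS⟩
      have hkey : f R - f (S l) ≤ (k:ℝ) * g := by
        have := mul_le_mul_of_nonneg_right hcard hg0
        linarith
      have hdiv : (f R - f (S l)) / (k:ℝ) ≤ g := by
        rw [div_le_iff₀ hkpos]; linarith [mul_comm g (k:ℝ)]
      have hexp : (1 - 1/(k:ℝ)) * (f R - f (S l))
          = (f R - f (S l)) - (f R - f (S l)) / (k:ℝ) := by
        field_simp
      rw [hSl1]
      linarith
    -- induction
    have main : ∀ l ≤ k, f R - f (S l) ≤ (1 - 1/(k:ℝ))^l * f R := by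
      intro l
      induction l with
      | zero => intro _; simp [hS0, hnorm]
      | succ n ih =>
        intro hl
        have hn : n < k := hl
        calc f R - f (S (n+1)) ≤ (1 - 1/(k:ℝ)) * (f R - f (S n)) := step n hn
          _ ≤ (1 - 1/(k:ℝ)) * ((1 - 1/(k:ℝ))^n * f R) :=
              mul_le_mul_of_nonneg_left (ih hn.le) h1k
          _ = (1 - 1/(k:ℝ))^(n+1) * f R := by ring
    have hpow : (1 - 1/(k:ℝ))^k ≤ Real.exp (-1) := by
      have h1 : (1 - 1/(k:ℝ)) ≤ Real.exp (-(1/(k:ℝ))) := by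
        have := Real.add_one_le_exp (-(1/(k:ℝ)))
        linarith
      calc (1 - 1/(k:ℝ))^k ≤ (Real.exp (-(1/(k:ℝ))))^k := pow_le_pow_left₀ h1k h1 k
        _ = Real.exp ((k:ℝ) * (-(1/(k:ℝ)))) := by rw [← Real.exp_nat_mul]
        _ = Real.exp (-1) := by
            congr 1
            field_simp
    have hfinal := main k le_rfl
    have h2 : (1 - 1/(k:ℝ))^k * f R ≤ Real.exp (-1) * f R :=
      mul_le_mul_of_nonneg_right hpow hfR
    have h3 : Real.exp (-1) = 1 / Real.exp 1 := by
      rw [Real.exp_neg]; exact inv_eq_one_div _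
    nlinarith [hfinal, h2]
end
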